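/- arXiv:1903.01592 — 2 statements merged into one kernel-verified Lean document; each statement's English description precedes it below -/
import Mathlib

section
/- Let V be an n-dimensional Euclidean space, H a symmetric bilinear form on V, and v ∈ V a nonzero vector such that the restriction H|_{v^⊥} is nondegenerate. Then det(H) = det(H|_{v^⊥}) · ‖v‖⁻² · H(v, v^H), where v^H is the projection of v onto (v^⊥)^{⊥_H} (the H-orthogonal complement of v^⊥) parallel to v^⊥. -/
/-! The family `(v^H, c₁, …, c_{n-1})` is `H`-orthogonal, so its `H`-Gram determinant is
`H(v^H, v^H) ∏ λᵢ = H(v, v^H) ∏ λᵢ`. Passing from `b` to any family multiplies the Gram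
determinant by the square of the `b`-determinant of that family; as `v^H − v ∈ span c`, the
`b`-determinant of `(v^H, c)` equals that of `(v, c)`, whose square is the Gram determinant
`‖v‖²` of the orthogonal family `(v, c)` for the inner product. -/

open Matrix Module Submodule

theorem AlternatingMap.map_cons_eq_of_sub_mem_span {K M N : Type*} [Field K] [AddCommGroup M]
    [Module K M] [AddCommGroup N] [Module K N] {m : ℕ} (f : M [⋀^Fin (m + 1)]→ₗ[K] N)
    {x y : M} (g : Fin m → M) (h : x - y ∈ span K (Set.range g)) :
    f (Fin.cons x g) = f (Fin.cons y g) := by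
  have hzero : f (Fin.cons (x - y) g) = 0 :=
    f.map_linearDependent _ fun hli => (linearIndependent_finCons.mp hli).2 h
  rw [← sub_add_cancel x y, ← f.coe_multilinearMap, MultilinearMap.cons_add, f.coe_multilinearMap,
    hzero, zero_add]

namespace LinearMap

variable {R M ι : Type*} [CommRing R] [AddCommGroup M] [Module R M]

def gram (B : M →ₗ[R] M →ₗ[R] R) (f : ι → M) : Matrix ι ι R :=
  of fun i j => B (f i) (f j)

variable [DecidableEq ι]

theorem gram_eq_diagonal {B : M →ₗ[R] M →ₗ[R] R} {f : ι → M} {d : ι → R}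
    (h : ∀ i j, B (f i) (f j) = if i = j then d i else 0) : B.gram f = diagonal d := by
  ext i j
  simp [gram, h, diagonal_apply]

theorem det_gram_cons {m : ℕ} {B : M →ₗ[R] M →ₗ[R] R} {x : M} {g : Fin m → M} {d : Fin m → R}
    (hx : ∀ i, B x (g i) = 0) (hx' : ∀ i, B (g i) x = 0)
    (hg : ∀ i j, B (g i) (g j) = if i = j then d i else 0) :
    (B.gram (Fin.cons x g : Fin (m + 1) → M)).det = B x x * ∏ i, d i := by
  rw [gram_eq_diagonal (d := Fin.cons (B x x) d), det_diagonal, Fin.prod_cons]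
  intro i j
  refine Fin.cases ?_ (fun i => ?_) i <;> refine Fin.cases ?_ (fun j => ?_) j <;>
    simp [hx, hx', hg, Fin.succ_ne_zero, eq_comm (a := (0 : Fin (m + 1)))]

variable [Fintype ι]

theorem det_gram_eq_det_sq_mul (B : M →ₗ[R] M →ₗ[R] R) (b : Basis ι R M) (f : ι → M) :
    (B.gram f).det = b.det f ^ 2 * (B.gram b).det := by
  have hgram : B.gram f = (b.toMatrix f)ᵀ * B.gram b * b.toMatrix f := by
    ext i j
    conv_lhs => rw [gram, of_apply, ← b.sum_repr (f i), ← b.sum_repr (f j)]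
    simp only [map_sum, map_smul, sum_apply, smul_apply, smul_eq_mul, Matrix.mul_apply,
      transpose_apply, Basis.toMatrix_apply, gram, of_apply, Finset.sum_mul, Finset.mul_sum]
    exact Finset.sum_congr rfl fun _ _ => Finset.sum_congr rfl fun _ _ => by ring
  rw [hgram, det_mul, det_mul, det_transpose, ← b.det_apply]
  ring

end LinearMap

theorem OrthonormalBasis.det_sq_eq_det_gram_inner {ι E : Type*} [Fintype ι] [DecidableEq ι]
    [NormedAddCommGroup E] [InnerProductSpace ℝ E] (b : OrthonormalBasis ι ℝ E) (f : ι → E) :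
    b.toBasis.det f ^ 2 = ((innerₗ E).gram f).det := by
  have hb : (innerₗ E).gram b = 1 := by
    ext i j
    simpa [LinearMap.gram, one_apply] using orthonormal_iff_ite.mp b.orthonormal i j
  rw [(innerₗ E).det_gram_eq_det_sq_mul b.toBasis, OrthonormalBasis.coe_toBasis, hb, det_one,
    mul_one]

section Projection

variable {K M ι : Type*} [Field K] [AddCommGroup M] [Module K M] [Fintype ι] [DecidableEq ι]
  {H : M →ₗ[K] M →ₗ[K] K} {c : ι → M} {lam : ι → K}

theorem LinearMap.apply_sub_sum_div_smul_eq_zero (hlam : ∀ i, lam i ≠ 0)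
    (hdiag : ∀ i j, H (c i) (c j) = if i = j then lam i else 0) (v : M) (j : ι) :
    H (v - ∑ i, (H v (c i) / lam i) • c i) (c j) = 0 := by
  simp [hdiag, hlam j]

theorem LinearMap.apply_sub_sum_div_smul_self (hH : ∀ x y, H x y = H y x) (hlam : ∀ i, lam i ≠ 0)
    (hdiag : ∀ i j, H (c i) (c j) = if i = j then lam i else 0) (v : M) :
    H (v - ∑ i, (H v (c i) / lam i) • c i) (v - ∑ i, (H v (c i) / lam i) • c i) =
      H v (v - ∑ i, (H v (c i) / lam i) • c i) := by
  have hc : ∀ i, H (c i) (v - ∑ i, (H v (c i) / lam i) • c i) = 0 := fun i => by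
    rw [hH, apply_sub_sum_div_smul_eq_zero hlam hdiag]
  simp [hc]

end Projection

open scoped RealInnerProductSpace

theorem OrthonormalBasis.det_gram_eq_prod_mul_apply_sub_sum {V : Type*} [NormedAddCommGroup V]
    [InnerProductSpace ℝ V] {m : ℕ} (b : OrthonormalBasis (Fin (m + 1)) ℝ V)
    {H : V →ₗ[ℝ] V →ₗ[ℝ] ℝ} (hH : ∀ x y, H x y = H y x) {v : V} (hv : v ≠ 0) {g : Fin m → V}
    (hg : Orthonormal ℝ g) (hvg : ∀ i, ⟪v, g i⟫ = 0) {lam : Fin m → ℝ} (hlam : ∀ i, lam i ≠ 0)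
    (hdiag : ∀ i j, H (g i) (g j) = if i = j then lam i else 0) :
    (H.gram b).det = (∏ i, lam i) * ‖v‖⁻¹ ^ 2 * H v (v - ∑ i, (H v (g i) / lam i) • g i) := by
  set vH := v - ∑ i, (H v (g i) / lam i) • g i
  have hvH : vH - v ∈ span ℝ (Set.range g) := by
    have hsum : ∑ i, (H v (g i) / lam i) • g i ∈ span ℝ (Set.range g) :=
      sum_mem fun i _ => smul_mem _ _ (subset_span (Set.mem_range_self i))
    simpa [vH] using neg_mem hsum
  have hdet_b : b.toBasis.det (Fin.cons vH g) ^ 2 = ‖v‖ ^ 2 := by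
    rw [b.toBasis.det.map_cons_eq_of_sub_mem_span g hvH, b.det_sq_eq_det_gram_inner,
      LinearMap.det_gram_cons (d := 1) hvg (fun i => (real_inner_comm _ _).trans (hvg i))
        (orthonormal_iff_ite.mp hg)]
    simp
  have hHorth : ∀ i, H vH (g i) = 0 := H.apply_sub_sum_div_smul_eq_zero hlam hdiag v
  have hchange := H.det_gram_eq_det_sq_mul b.toBasis (Fin.cons vH g)
  rw [LinearMap.det_gram_cons hHorth (fun i => (hH _ _).trans (hHorth i)) hdiag,
    H.apply_sub_sum_div_smul_self hH hlam hdiag, hdet_b, b.coe_toBasis] at hchange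
  have hv' : ‖v‖ ≠ 0 := norm_ne_zero_iff.mpr hv
  field_simp
  linarith

theorem stmt2_general {V : Type*} [NormedAddCommGroup V] [InnerProductSpace ℝ V] {n : ℕ}
    (H : V →ₗ[ℝ] V →ₗ[ℝ] ℝ) (hH : ∀ x y, H x y = H y x)
    (v : V) (hv : v ≠ 0)
    (b : OrthonormalBasis (Fin n) ℝ V)
    (c : OrthonormalBasis (Fin (n - 1)) ℝ ((ℝ ∙ v)ᗮ : Submodule ℝ V))
    (lam : Fin (n - 1) → ℝ) (hlam : ∀ i, lam i ≠ 0)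
    (hdiag : ∀ i j, H (c i : V) (c j : V) = if i = j then lam i else 0) :
    Matrix.det (Matrix.of fun i j => H (b i) (b j)) =
      Matrix.det (Matrix.of fun i j => H (c i : V) (c j : V)) * ‖v‖⁻¹ ^ 2 *
        H v (v - ∑ i, (H v (c i : V) / lam i) • (c i : V)) := by
  obtain ⟨m, rfl⟩ : ∃ m, n = m + 1 := Nat.exists_eq_succ_of_ne_zero fun hn => by
    subst hn
    exact hv (by simpa using (b.sum_repr v).symm)
  have hc : Orthonormal ℝ fun i => (c i : V) := c.orthonormal.comp_linearIsometry (ℝ ∙ v)ᗮ.subtypeₗᵢ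
  have hvc : ∀ i, ⟪v, (c i : V)⟫ = 0 := fun i =>
    mem_orthogonal_singleton_iff_inner_right.mp (c i).2
  change (H.gram b).det = (H.gram fun i => (c i : V)).det * _ * _
  rw [H.gram_eq_diagonal hdiag, det_diagonal]
  exact b.det_gram_eq_prod_mul_apply_sub_sum hH hv hc hvc hlam hdiag

/-- For a symmetric bilinear form `H` on an `n`-dimensional Euclidean space and a nonzero
vector `v` such that `H` restricted to `v^⊥` is nondegenerate (here: diagonalized by an
orthonormal basis `c` of `v^⊥` with nonzero eigenvalues `lam`), one has
`det H = det (H|_{v^⊥}) · ‖v‖⁻² · H(v, v^H)`, where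
`v^H = v − Σᵢ (H(v, cᵢ)/lamᵢ) • cᵢ` is the projection of `v` onto the `H`-orthogonal
complement of `v^⊥` parallel to `v^⊥`. Determinants are taken in orthonormal bases. -/
theorem stmt2 {V : Type*} [NormedAddCommGroup V] [InnerProductSpace ℝ V]
    [FiniteDimensional ℝ V] {n : ℕ} (hn : 0 < n)
    (hdim : Module.finrank ℝ V = n)
    (H : V →ₗ[ℝ] V →ₗ[ℝ] ℝ) (hH : ∀ x y, H x y = H y x)
    (v : V) (hv : v ≠ 0)
    (b : OrthonormalBasis (Fin n) ℝ V)
    (c : OrthonormalBasis (Fin (n - 1)) ℝ ((ℝ ∙ v)ᗮ : Submodule ℝ V))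
    (lam : Fin (n - 1) → ℝ) (hlam : ∀ i, lam i ≠ 0)
    (hdiag : ∀ i j, H (c i : V) (c j : V) = if i = j then lam i else 0) :
    Matrix.det (Matrix.of fun i j => H (b i) (b j)) =
      Matrix.det (Matrix.of fun i j => H (c i : V) (c j : V)) * ‖v‖⁻¹ ^ 2 *
        H v (v - ∑ i, (H v (c i : V) / lam i) • (c i : V)) :=
  stmt2_general H hH v hv b c lam hlam hdiag
end

section
/- Let (M, g) be a Riemannian manifold, f : M → ℝ a proper, bounded-below C¹ function with 0 a regular value, and suppose inf over a compact neighborhood K of Z_f of ‖grad f‖ is at least 2ε > 0 and inf of |f| outside K is at least 2ε. If h, k are C¹ functions with 0 a regular value, compact sublevel sets, and sup-C¹-distance to f less than ε, then the symmetric difference M⁰_h △ M⁰_k is contained in the tubular neighborhood of Z_h of radius (1/ε)·sup|h − k|; i.e., every point of M⁰_h △ M⁰_k is at Riemannian distance at most (1/ε)·sup|h−k| from Z_h. -/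
/-!
Let `0 ≤ h x` and `k x ≤ 0`, so that `h x ≤ δ` and `f x < ε`. On `{|f| < 2ε}` the gradient of `f`
has norm at least `2ε`, hence on `{|h| ≤ ε}` that of `h` has norm more than `ε`. Instead of
following a gradient flow we use its variational substitute: if `‖∇φ‖ > c` on `{a < φ ≤ φ x}`,
then `φ` drops to `a` within distance `(φ x - a) / c` of `x`, because a minimizer `z` of
`w ↦ max (φ w) a + c * dist x w` with `a < φ z` would have slope at most `c`. If `h x ≤ ε`, descend
`h` to `0` at speed `ε`. If `h x > ε`, then `δ > ε`, and we descend `f` from below `ε` to `-ε`,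
where already `h < 0`, at speed `2ε²/δ < 2ε`. Either way a point of `{h ≤ 0}` lies within `δ / ε`
of `x`, and the intermediate value theorem on the segment gives a zero of `h`. The other half of
the symmetric difference follows by replacing `f, h` with `-f, -h`.
-/

open Set Filter Topology
open scoped symmDiff

section NormedSpace

variable {E : Type*} [NormedAddCommGroup E] [NormedSpace ℝ E] {φ : E → ℝ}

lemma norm_fderiv_le_of_eventually_le_add_mul_dist {z : E} {c : ℝ} (hd : DifferentiableAt ℝ φ z)
    (hc : 0 ≤ c) (hmin : ∀ᶠ w in 𝓝 z, φ z ≤ φ w + c * dist z w) : ‖fderiv ℝ φ z‖ ≤ c := by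
  have hdir : ∀ v, -fderiv ℝ φ z v ≤ c * ‖v‖ := by
    intro v
    set g : ℝ → ℝ := fun t => φ (z + t • v)
    have hg : HasDerivAt g (fderiv ℝ φ z v) 0 := by
      have hline : HasDerivAt (fun t : ℝ => z + t • v) v 0 := by
        simpa using ((hasDerivAt_id (0 : ℝ)).smul_const v).const_add z
      exact hd.hasFDerivAt.comp_hasDerivAt_of_eq 0 hline (by simp)
    have hslope : Tendsto (slope g 0) (𝓝[>] 0) (𝓝 (fderiv ℝ φ z v)) :=
      (hasDerivAt_iff_tendsto_slope.mp hg).mono_left (nhdsWithin_mono _ fun _ ht => ne_of_gt ht)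
    have hline_lim : Tendsto (fun t : ℝ => z + t • v) (𝓝 0) (𝓝 z) :=
      Continuous.tendsto' (by fun_prop) 0 z (by simp)
    have hbound : ∀ᶠ t in 𝓝[>] (0 : ℝ), -(c * ‖v‖) ≤ slope g 0 t := by
      filter_upwards [nhdsWithin_le_nhds (hline_lim.eventually hmin), self_mem_nhdsWithin]
        with t ht (htpos : 0 < t)
      rw [dist_self_add_right, norm_smul, Real.norm_of_nonneg htpos.le] at ht
      rw [slope_def_field, sub_zero, le_div_iff₀ htpos]
      simp only [g, zero_smul, add_zero]
      linarith
    linarith [ge_of_tendsto hslope hbound]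
  refine ContinuousLinearMap.opNorm_le_bound _ hc fun v => abs_le.2 ⟨?_, ?_⟩
  · linarith [hdir v]
  · simpa using hdir (-v)

lemma exists_le_dist_le_of_lt_norm_fderiv [ProperSpace E] (hφ : Differentiable ℝ φ) {a c : ℝ}
    (hc : 0 < c) {x : E} (hax : a ≤ φ x)
    (hslope : ∀ z, a < φ z → φ z ≤ φ x → c < ‖fderiv ℝ φ z‖) :
    ∃ y, φ y ≤ a ∧ dist x y ≤ (φ x - a) / c := by
  set F : E → ℝ := fun w => max (φ w) a + c * dist x w
  have hFcont : Continuous F := by have := hφ.continuous; fun_prop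
  have hFlim : Tendsto F (cocompact E) atTop := by
    refine tendsto_atTop_mono (fun w => add_le_add_left (le_max_right (φ w) a) _) ?_
    exact tendsto_atTop_add_const_left _ a
      ((tendsto_dist_left_cocompact_atTop x).const_mul_atTop hc)
  obtain ⟨z, hzmin⟩ := hFcont.exists_forall_le' x (hFlim.eventually_ge_atTop _)
  have hFz : max (φ z) a + c * dist x z ≤ φ x := by
    simpa [F, max_eq_left hax] using hzmin x
  by_cases hz : φ z ≤ a
  · refine ⟨z, hz, ?_⟩
    rw [max_eq_right hz] at hFz
    rw [le_div_iff₀ hc]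
    linarith
  push Not at hz
  have hlocal : ∀ᶠ w in 𝓝 z, φ z ≤ φ w + c * dist z w := by
    filter_upwards [(isOpen_lt continuous_const hφ.continuous).mem_nhds hz] with w (hw : a < φ w)
    have := hzmin w
    simp only [F, max_eq_left hz.le, max_eq_left hw.le] at this
    nlinarith [dist_triangle x z w]
  have hzx : φ z ≤ φ x := by
    linarith [le_max_left (φ z) a, mul_nonneg hc.le (dist_nonneg (x := x) (y := z))]
  exact absurd (norm_fderiv_le_of_eventually_le_add_mul_dist hφ.differentiableAt hc.le hlocal)
    (hslope z hz hzx).not_ge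

lemma exists_eq_zero_dist_le_of_nonneg_of_nonpos (hφ : Continuous φ) {x y : E} (hx : 0 ≤ φ x)
    (hy : φ y ≤ 0) : ∃ w, φ w = 0 ∧ dist x w ≤ dist x y := by
  obtain ⟨w, hw, hw0⟩ := (convex_segment x y).isPreconnected.intermediate_value
    (right_mem_segment ℝ x y) (left_mem_segment ℝ x y) hφ.continuousOn ⟨hy, hx⟩
  exact ⟨w, hw0, (dist_add_dist_of_mem_segment hw).symm ▸ le_add_of_nonneg_right dist_nonneg⟩

end NormedSpace

section InnerProductSpace

variable {E : Type*} [NormedAddCommGroup E] [InnerProductSpace ℝ E]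

lemma norm_gradient_eq_norm_fderiv [CompleteSpace E] (φ : E → ℝ) (z : E) :
    ‖gradient φ z‖ = ‖fderiv ℝ φ z‖ := by
  simp [gradient]

lemma gradient_fun_neg [CompleteSpace E] (φ : E → ℝ) (z : E) :
    gradient (fun w => -φ w) z = -gradient φ z := by
  simp [gradient, fderiv_fun_neg]

variable [ProperSpace E] {f h : E → ℝ} {ε δ : ℝ}

lemma exists_le_zero_dist_le_of_nonneg (hf : Differentiable ℝ f) (hh : Differentiable ℝ h)
    (hε : 0 < ε) (hfgrad : ∀ z, |f z| < 2 * ε → 2 * ε ≤ ‖gradient f z‖)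
    (hval : ∀ z, |h z - f z| < ε) (hgrad : ∀ z, ‖gradient h z - gradient f z‖ < ε)
    {x : E} (hx : 0 ≤ h x) (hxδ : h x ≤ δ) (hfx : f x < ε) :
    ∃ y, h y ≤ 0 ∧ dist x y ≤ δ / ε := by
  rcases le_or_gt (h x) ε with hxε | hxε
  · have hslope : ∀ z, 0 < h z → h z ≤ h x → ε < ‖fderiv ℝ h z‖ := by
      intro z hz hzx
      obtain ⟨hlo, hhi⟩ := abs_lt.1 (hval z)
      have hfz : |f z| < 2 * ε := abs_lt.2 ⟨by linarith, by linarith⟩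
      rw [← norm_gradient_eq_norm_fderiv]
      linarith [hfgrad z hfz, hgrad z, norm_sub_norm_le (gradient f z) (gradient h z),
        norm_sub_rev (gradient f z) (gradient h z)]
    obtain ⟨y, hy, hdist⟩ := exists_le_dist_le_of_lt_norm_fderiv hh hε hx hslope
    exact ⟨y, hy, hdist.trans (by gcongr; linarith)⟩
  · have hδ : 0 < δ := hε.trans (hxε.trans_le hxδ)
    have hc : 0 < 2 * ε ^ 2 / δ := by positivity
    have hslope : ∀ z, -ε < f z → f z ≤ f x → 2 * ε ^ 2 / δ < ‖fderiv ℝ f z‖ := by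
      intro z hz hzx
      rw [← norm_gradient_eq_norm_fderiv]
      refine lt_of_lt_of_le ?_ (hfgrad z (abs_lt.2 ⟨by linarith, by linarith⟩))
      rw [div_lt_iff₀ hδ]
      nlinarith
    obtain ⟨y, hy, hdist⟩ :=
      exists_le_dist_le_of_lt_norm_fderiv hf hc (by linarith [(abs_lt.1 (hval x)).2]) hslope
    refine ⟨y, by linarith [(abs_lt.1 (hval y)).2], hdist.trans ?_⟩
    rw [div_le_div_iff₀ hc hε]
    field_simp
    nlinarith

lemma exists_eq_zero_dist_le_of_nonneg (hf : Differentiable ℝ f) (hh : Differentiable ℝ h)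
    (hε : 0 < ε) (hfgrad : ∀ z, |f z| < 2 * ε → 2 * ε ≤ ‖gradient f z‖)
    (hval : ∀ z, |h z - f z| < ε) (hgrad : ∀ z, ‖gradient h z - gradient f z‖ < ε)
    {x : E} (hx : 0 ≤ h x) (hxδ : h x ≤ δ) (hfx : f x < ε) :
    ∃ z, h z = 0 ∧ dist x z ≤ δ / ε := by
  obtain ⟨y, hy, hdist⟩ :=
    exists_le_zero_dist_le_of_nonneg hf hh hε hfgrad hval hgrad hx hxδ hfx
  obtain ⟨z, hz, hzdist⟩ := exists_eq_zero_dist_le_of_nonneg_of_nonpos hh.continuous hx hy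
  exact ⟨z, hz, hzdist.trans hdist⟩

lemma exists_eq_zero_dist_le_of_nonpos (hf : Differentiable ℝ f) (hh : Differentiable ℝ h)
    (hε : 0 < ε) (hfgrad : ∀ z, |f z| < 2 * ε → 2 * ε ≤ ‖gradient f z‖)
    (hval : ∀ z, |h z - f z| < ε) (hgrad : ∀ z, ‖gradient h z - gradient f z‖ < ε)
    {x : E} (hx : h x ≤ 0) (hxδ : -δ ≤ h x) (hfx : -ε < f x) :
    ∃ z, h z = 0 ∧ dist x z ≤ δ / ε := by
  obtain ⟨z, hz, hdist⟩ := exists_eq_zero_dist_le_of_nonneg (f := fun w => -f w)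
    (h := fun w => -h w) hf.neg hh.neg hε (by simpa only [gradient_fun_neg, abs_neg, norm_neg])
    (fun w => by simpa only [neg_sub_neg, abs_sub_comm] using hval w)
    (fun w => by simpa only [gradient_fun_neg, neg_sub_neg, norm_sub_rev] using hgrad w)
    (neg_nonneg.2 hx) (neg_le.1 hxδ) (neg_lt.1 hfx)
  exact ⟨z, neg_eq_zero.1 hz, hdist⟩

end InnerProductSpace

theorem stmt14_general {n : ℕ} (f h k : EuclideanSpace ℝ (Fin n) → ℝ)
    (hf : ContDiff ℝ 1 f) (hh : ContDiff ℝ 1 h)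
    (K : Set (EuclideanSpace ℝ (Fin n)))
    (ε : ℝ) (hε : 0 < ε)
    (hKgrad : ∀ x ∈ K, 2 * ε ≤ ‖gradient f x‖)
    (hKout : ∀ x ∉ K, 2 * ε ≤ |f x|)
    (hhf : ∀ x, |h x - f x| + ‖gradient h x - gradient f x‖ < ε)
    (hkf : ∀ x, |k x - f x| + ‖gradient k x - gradient f x‖ < ε)
    (δ : ℝ) (hδ : ∀ x, |h x - k x| ≤ δ) :
    ∀ x ∈ (h ⁻¹' Iic 0) ∆ (k ⁻¹' Iic 0), ∃ z, h z = 0 ∧ dist x z ≤ δ / ε := by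
  have hfgrad : ∀ z, |f z| < 2 * ε → 2 * ε ≤ ‖gradient f z‖ := fun z hz =>
    hKgrad z (by_contra fun hzK => (hKout z hzK).not_gt hz)
  have hval : ∀ z, |h z - f z| < ε := fun z =>
    (le_add_of_nonneg_right (norm_nonneg _)).trans_lt (hhf z)
  have hgrad : ∀ z, ‖gradient h z - gradient f z‖ < ε := fun z =>
    (le_add_of_nonneg_left (abs_nonneg _)).trans_lt (hhf z)
  have hf' := hf.differentiable one_ne_zero
  have hh' := hh.differentiable one_ne_zero
  intro x hx
  obtain ⟨hkf_lo, hkf_hi⟩ := abs_lt.1 ((le_add_of_nonneg_right (norm_nonneg _)).trans_lt (hkf x))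
  obtain ⟨hhk_lo, hhk_hi⟩ := abs_le.1 (hδ x)
  rcases hx with ⟨hhx, hkx⟩ | ⟨hkx, hhx⟩ <;> simp only [mem_preimage, mem_Iic, not_le] at hhx hkx
  · exact exists_eq_zero_dist_le_of_nonpos hf' hh' hε hfgrad hval hgrad hhx (by linarith)
      (by linarith)
  · exact exists_eq_zero_dist_le_of_nonneg hf' hh' hε hfgrad hval hgrad hhx.le (by linarith)
      (by linarith)

/-- (Formalized on the Riemannian manifold `ℝⁿ`.) Let `f` be a proper, bounded-below `C¹`
function with `0` a regular value; let `K` be a compact neighborhood of `Z_f = f⁻¹({0})`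
with `‖grad f‖ ≥ 2ε` on `K` and `|f| ≥ 2ε` off `K`.  If `h, k` are `C¹` functions with `0` a
regular value, compact sublevel sets, and sup-`C¹`-distance to `f` less than `ε`, and
`sup|h − k| ≤ δ`, then every point of `M⁰_h ∆ M⁰_k` is at distance at most `δ/ε` from
`Z_h`. -/
theorem stmt14 {n : ℕ} (f h k : EuclideanSpace ℝ (Fin n) → ℝ)
    (hf : ContDiff ℝ 1 f) (hh : ContDiff ℝ 1 h) (hk : ContDiff ℝ 1 k)
    (hfprop : ∀ K : Set ℝ, IsCompact K → IsCompact (f ⁻¹' K))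
    (hfbdd : BddBelow (Set.range f))
    (hfreg : ∀ x, f x = 0 → gradient f x ≠ 0)
    (hhreg : ∀ x, h x = 0 → gradient h x ≠ 0)
    (hkreg : ∀ x, k x = 0 → gradient k x ≠ 0)
    (hhsub : ∀ a : ℝ, IsCompact (h ⁻¹' Iic a))
    (hksub : ∀ a : ℝ, IsCompact (k ⁻¹' Iic a))
    (K : Set (EuclideanSpace ℝ (Fin n))) (hK : IsCompact K)
    (hKnb : K ∈ nhdsSet (f ⁻¹' {0}))
    (ε : ℝ) (hε : 0 < ε)
    (hKgrad : ∀ x ∈ K, 2 * ε ≤ ‖gradient f x‖)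
    (hKout : ∀ x ∉ K, 2 * ε ≤ |f x|)
    (hhf : ∀ x, |h x - f x| + ‖gradient h x - gradient f x‖ < ε)
    (hkf : ∀ x, |k x - f x| + ‖gradient k x - gradient f x‖ < ε)
    (δ : ℝ) (hδ : ∀ x, |h x - k x| ≤ δ) :
    ∀ x ∈ (h ⁻¹' Iic 0) ∆ (k ⁻¹' Iic 0), ∃ z, h z = 0 ∧ dist x z ≤ δ / ε :=
  stmt14_general f h k hf hh K ε hε hKgrad hKout hhf hkf δ hδ
end
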